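/- Let H ∈ (1/2,1) and T > 0. Then sup_{0 < s < t ≤ T} φ(s,t) / (s^{2H−1} (t−s)) < ∞, where φ(s,t) := (1/2)(t^{2H} − s^{2H} − (t−s)^{2H}). -/

import Mathlib

open Real Set

noncomputable section

/-- `φ(s,t) = (1/2)(t^{2H} − s^{2H} − (t−s)^{2H})`. -/
def phiFn (H s t : ℝ) : ℝ := (t ^ (2*H) - s ^ (2*H) - (t - s) ^ (2*H)) / 2

end

/-!
With `a = 2H ∈ [1, 2]`, the function `u ↦ u^a - (u-s)^a - a s^{a-1} (u-s)` is antitone on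
`[s, ∞)`: its derivative `a (u^{a-1} - (u-s)^{a-1} - s^{a-1})` is nonpositive because
`x ↦ x^{a-1}` is subadditive. Comparing its values at `s` and `t` gives
`φ(s,t) ≤ H s^{2H-1} (t-s)`, so `H` bounds the quotient.
-/

lemma antitoneOn_rpow_sub_rpow_sub_mul {a s : ℝ} (ha1 : 1 ≤ a) (ha2 : a ≤ 2) (hs : 0 ≤ s) :
    AntitoneOn (fun u => u ^ a - (u - s) ^ a - a * s ^ (a - 1) * (u - s)) (Ici s) := by
  have ha0 : 0 ≤ a := by linarith
  refine antitoneOn_of_hasDerivWithinAt_nonpos (convex_Ici s) (by fun_prop (disch := assumption))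
    (f' := fun u => a * u ^ (a - 1) - a * (u - s) ^ (a - 1) - a * s ^ (a - 1)) ?_ ?_
  · intro u hu
    rw [interior_Ici] at hu
    have hu0 : u ≠ 0 := (hs.trans_lt hu).ne'
    have hus : u - s ≠ 0 := (sub_pos.mpr hu).ne'
    have hdiff := ((hasDerivAt_rpow_const (p := a) (Or.inl hu0)).sub
      (((hasDerivAt_id u).sub_const s).rpow_const (p := a) (Or.inl hus))).sub
      (((hasDerivAt_id u).sub_const s).const_mul (a * s ^ (a - 1)))
    exact hdiff.hasDerivWithinAt.congr_deriv (by simp)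
  · intro u hu
    rw [interior_Ici] at hu
    have hsubadd : u ^ (a - 1) ≤ s ^ (a - 1) + (u - s) ^ (a - 1) := by
      simpa using rpow_add_le_add_rpow hs (sub_pos.mpr hu).le (by linarith) (by linarith)
    nlinarith [mul_le_mul_of_nonneg_left hsubadd ha0]

lemma rpow_sub_rpow_sub_rpow_le_mul {a s t : ℝ} (ha1 : 1 ≤ a) (ha2 : a ≤ 2) (hs : 0 ≤ s)
    (hst : s ≤ t) : t ^ a - s ^ a - (t - s) ^ a ≤ a * s ^ (a - 1) * (t - s) := by
  have h := antitoneOn_rpow_sub_rpow_sub_mul ha1 ha2 hs self_mem_Ici hst hst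
  simp only [sub_self, zero_rpow (by linarith : a ≠ 0), mul_zero, sub_zero] at h
  linarith

lemma phiFn_le {H s t : ℝ} (hH1 : 1 / 2 ≤ H) (hH2 : H ≤ 1) (hs : 0 ≤ s) (hst : s ≤ t) :
    phiFn H s t ≤ H * (s ^ (2 * H - 1) * (t - s)) := by
  have h := rpow_sub_rpow_sub_rpow_le_mul (a := 2 * H) (by linarith) (by linarith) hs hst
  unfold phiFn
  linarith

theorem statement18_general (H : ℝ) (hH : H ∈ Set.Ioo (1/2 : ℝ) 1) (T : ℝ) :
    BddAbove {r : ℝ | ∃ s t : ℝ, 0 < s ∧ s < t ∧ t ≤ T ∧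
      r = phiFn H s t / (s ^ (2*H-1) * (t - s))} := by
  refine ⟨H, ?_⟩
  rintro r ⟨s, t, hs, hst, -, rfl⟩
  have hden : 0 < s ^ (2 * H - 1) * (t - s) := mul_pos (rpow_pos_of_pos hs _) (sub_pos.mpr hst)
  rw [div_le_iff₀ hden]
  exact phiFn_le hH.1.le hH.2.le hs.le hst.le

/-- For `H ∈ (1/2,1)` and `T > 0`,
`sup_{0 < s < t ≤ T} φ(s,t)/(s^{2H−1}(t−s)) < ∞`. -/
theorem statement18 (H : ℝ) (hH : H ∈ Set.Ioo (1/2 : ℝ) 1) (T : ℝ) (hT : 0 < T) :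
    BddAbove {r : ℝ | ∃ s t : ℝ, 0 < s ∧ s < t ∧ t ≤ T ∧
      r = phiFn H s t / (s ^ (2*H-1) * (t - s))} :=
  statement18_general H hH T
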